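/- Counting flows by their zero sets: Let G = (V, E, ε) be a finite multigraph with an orientation (s, t), let q be a positive integer, H any finite abelian group of cardinality q, and A ⊆ E. Then q^{|E∖A| − r_G(E∖A)} = ∑_{B with A ⊆ B ⊆ E} χ*(G − B; q), where r_G(S) := |V| − k_G(S) and χ*(G − B; q) is the number of nowhere-zero H-flows of the deletion G − B. (Here q^{|E∖A| − r_G(E∖A)} counts all H-flows of G − A, and each such flow φ corresponds to the nowhere-zero flow of G − B for B = A ∪ {e ∈ E∖A : φ(e) = 0}.) -/

import Mathlib

open Finset

/-- The number of connected components of the spanning subgraph `(V, A)` of the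
multigraph given by `ε : E → Sym2 V`. -/
noncomputable def multigraphComponents {V E : Type*} (ε : E → Sym2 V) (A : Finset E) : ℕ :=
  Nat.card (SimpleGraph.fromEdgeSet (ε '' (A : Set E))).ConnectedComponent

/-- The number of nowhere-zero `H`-flows of the multigraph with edge set `S` and
orientation given by source and target maps `s t : E → V`. -/
noncomputable def nzFlowCount {V E : Type*} [Fintype V] [Fintype E] [DecidableEq V]
    (s t : E → V) (S : Finset E) (H : Type*) [AddCommGroup H] [Fintype H] : ℕ :=
  Nat.card {φ : {e : E // e ∈ S} → H //
    (∀ x : V, (∑ e : {e : E // e ∈ S}, if s e.1 = x then φ e else 0) =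
              (∑ e : {e : E // e ∈ S}, if t e.1 = x then φ e else 0)) ∧
    ∀ e, φ e ≠ 0}

/-! Each `H`-flow of `G − A` is a nowhere-zero flow of `G − B` for exactly one `B ⊇ A`, namely
`A` together with the edges where it vanishes; so the right-hand side counts the `H`-flows of
`G − A`. These form a group, which we count by adding the edges of `E ∖ A` one at a time. An edge
whose ends are already connected (a loop, say) closes a cycle around which any value can be
routed, so it multiplies the count by `q` and leaves `k` unchanged. A bridge carries no flow,
since the net outflow of the component on one side of it vanishes, and it lowers `k` by one.
Hence `G − A` has `q ^ (|E ∖ A| + k(E ∖ A) - |V|)` flows. -/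

open SimpleGraph

namespace SimpleGraph

variable {V : Type*} {G : SimpleGraph V} {a b : V}

lemma reachable_sup_edge_iff {x y : V} :
    (G ⊔ edge a b).Reachable x y ↔ G.Reachable x y ∨
      (G.Reachable x a ∧ G.Reachable b y) ∨ (G.Reachable x b ∧ G.Reachable a y) := by
  constructor
  · rintro ⟨p⟩
    induction p with
    | nil => exact .inl .rfl
    | cons hadj _ ih =>
      rcases hadj with hadj | hadj
      · have h := hadj.reachable
        exact ih.imp h.trans (.imp (.imp_left h.trans) (.imp_left h.trans))
      · obtain ⟨⟨rfl, rfl⟩ | ⟨rfl, rfl⟩, -⟩ := (edge_adj ..).mp hadj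
        · rcases ih with h | h | h
          exacts [.inr (.inl ⟨.rfl, h⟩), .inr (.inl ⟨.rfl, h.2⟩), .inl h.2]
        · rcases ih with h | h | h
          exacts [.inr (.inr ⟨.rfl, h⟩), .inl h.2, .inr (.inr ⟨.rfl, h.2⟩)]
  · have hle : G ≤ G ⊔ edge a b := le_sup_left
    have hab : (G ⊔ edge a b).Reachable a b := by
      rcases eq_or_ne a b with rfl | hne
      · rfl
      · exact Adj.reachable (.inr ((edge_adj ..).mpr ⟨.inl ⟨rfl, rfl⟩, hne⟩))
    rintro (h | ⟨h₁, h₂⟩ | ⟨h₁, h₂⟩)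
    · exact h.mono hle
    · exact (h₁.mono hle).trans (hab.trans (h₂.mono hle))
    · exact (h₁.mono hle).trans (hab.symm.trans (h₂.mono hle))

lemma card_connectedComponent_sup_edge_of_reachable (h : G.Reachable a b) :
    Nat.card (G ⊔ edge a b).ConnectedComponent = Nat.card G.ConnectedComponent :=
  Nat.card_congr <| Quot.congrRight fun x y => by
    rw [reachable_sup_edge_iff]
    refine ⟨?_, .inl⟩
    rintro (h' | ⟨h₁, h₂⟩ | ⟨h₁, h₂⟩)
    exacts [h', h₁.trans (h.trans h₂), h₁.trans (h.symm.trans h₂)]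

lemma card_connectedComponent_eq_card_sup_edge_add_one [Finite V] (h : ¬G.Reachable a b) :
    Nat.card G.ConnectedComponent = Nat.card (G ⊔ edge a b).ConnectedComponent + 1 := by
  classical
  let π : {c : G.ConnectedComponent // c ≠ G.connectedComponentMk b} →
      (G ⊔ edge a b).ConnectedComponent := fun c => c.1.map (Hom.ofLE le_sup_left)
  have hπ : π.Bijective := by
    refine ⟨?_, fun c => ?_⟩
    · rintro ⟨c, hc⟩ ⟨d, hd⟩ hcd
      induction c using ConnectedComponent.ind
      induction d using ConnectedComponent.ind
      simp only [π, ConnectedComponent.map_mk, Hom.ofLE_apply, ConnectedComponent.eq,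
        reachable_sup_edge_iff] at hcd
      rcases hcd with h' | ⟨-, h'⟩ | ⟨h', -⟩
      · exact Subtype.ext (ConnectedComponent.sound h')
      · exact (hd (ConnectedComponent.sound h'.symm)).elim
      · exact (hc (ConnectedComponent.sound h')).elim
    · induction c using ConnectedComponent.ind with | _ v =>
      by_cases hv : G.Reachable b v
      · refine ⟨⟨G.connectedComponentMk a, by simpa using h⟩, ?_⟩
        simp only [π, ConnectedComponent.map_mk, Hom.ofLE_apply, ConnectedComponent.eq,
          reachable_sup_edge_iff]
        exact .inr (.inl ⟨.rfl, hv⟩)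
      · exact ⟨⟨G.connectedComponentMk v, by simpa [reachable_comm] using hv⟩, rfl⟩
  rw [← Nat.card_congr (Equiv.optionSubtypeNe (G.connectedComponentMk b)), Finite.card_option,
    Nat.card_congr (Equiv.ofBijective π hπ)]

lemma card_connectedComponent_bot :
    Nat.card (⊥ : SimpleGraph V).ConnectedComponent = Nat.card V :=
  Nat.card_congr (Equiv.ofBijective _ ⟨fun _ _ h => reachable_bot.mp (ConnectedComponent.exact h),
    Quot.mk_surjective⟩).symm

end SimpleGraph

lemma multigraphComponents_insert {V E : Type*} [DecidableEq E] {ε : E → Sym2 V}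
    {s t : E → V} (hst : ∀ e, ε e = s(s e, t e)) (e₀ : E) (S : Finset E) :
    multigraphComponents ε (insert e₀ S) =
      Nat.card (fromEdgeSet (ε '' S) ⊔ edge (s e₀) (t e₀)).ConnectedComponent := by
  rw [multigraphComponents, coe_insert, Set.image_insert_eq, Set.insert_eq, fromEdgeSet_union,
    hst, sup_comm, edge]

section Flows

variable {V E : Type*} [DecidableEq V] [Fintype E] {s t : E → V} {H : Type*} [AddCommGroup H]

variable (s t) in
def netOutflow : (E → H) →+ V → H :=
  ∑ e, (AddMonoidHom.single (fun _ => H) (s e) - AddMonoidHom.single (fun _ => H) (t e)).comp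
    (Pi.evalAddMonoidHom (fun _ => H) e)

lemma netOutflow_apply (f : E → H) (x : V) :
    netOutflow s t f x =
      (∑ e, if s e = x then f e else 0) - ∑ e, if t e = x then f e else 0 := by
  simp [netOutflow, Pi.single_apply, eq_comm]

lemma netOutflow_single [DecidableEq E] (e : E) (h : H) :
    netOutflow s t (Pi.single e h) = Pi.single (s e) h - Pi.single (t e) h := by
  simp only [netOutflow, AddMonoidHom.finsetSum_apply, AddMonoidHom.comp_apply,
    AddMonoidHom.sub_apply, Pi.evalAddMonoidHom_apply, AddMonoidHom.single_apply]
  rw [Finset.sum_eq_single e (fun e' _ he' => by simp [he']) (by simp)]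
  simp

lemma sum_netOutflow_apply (C : Finset V) (f : E → H) :
    ∑ x ∈ C, netOutflow s t f x =
      ∑ e, ((if s e ∈ C then f e else 0) - if t e ∈ C then f e else 0) := by
  simp [netOutflow, Finset.sum_apply, Finset.sum_comm (s := C), Finset.sum_pi_single']

lemma netOutflow_eq_zero_iff_of_support {S : Finset E} {f : E → H} (hf : ∀ e ∉ S, f e = 0) :
    netOutflow s t f = 0 ↔ ∀ x, (∑ e : S, if s e = x then f e else 0) =
      ∑ e : S, if t e = x then f e else 0 := by
  have hsum (c : E → V) (x : V) :
      ∑ e : S, (if c e = x then f e else 0) = ∑ e, if c e = x then f e else 0 := by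
    rw [sum_coe_sort S fun e => if c e = x then f e else 0]
    exact sum_subset (subset_univ S) fun e _ he => by simp [hf e he]
  simp only [funext_iff, Pi.zero_apply, netOutflow_apply, sub_eq_zero, hsum]

variable (s t) in
/-- The flows of the deletion `G − (E ∖ S)`, extended by zero to all of `E`. -/
def supportedFlows (S : Finset E) (H : Type*) [AddCommGroup H] : AddSubgroup (E → H) :=
  (netOutflow s t).ker ⊓ AddSubgroup.pi (↑S)ᶜ fun _ => ⊥

lemma mem_supportedFlows {S : Finset E} {f : E → H} :
    f ∈ supportedFlows s t S H ↔ netOutflow s t f = 0 ∧ ∀ e ∉ S, f e = 0 := by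
  simp [supportedFlows, AddSubgroup.mem_pi]

lemma supportedFlows_mono {S T : Finset E} (h : S ⊆ T) :
    supportedFlows s t S H ≤ supportedFlows s t T H := fun _ hf =>
  mem_supportedFlows.mpr ⟨(mem_supportedFlows.mp hf).1,
    fun e he => (mem_supportedFlows.mp hf).2 e (fun h' => he (h h'))⟩

lemma supportedFlows_empty : supportedFlows s t ∅ H = ⊥ := by
  ext f
  simp only [mem_supportedFlows, notMem_empty, not_false_eq_true, forall_const,
    AddSubgroup.mem_bot]
  exact ⟨fun h => funext h.2, fun h => ⟨h ▸ map_zero _, fun e => h ▸ rfl⟩⟩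

lemma mem_supportedFlows_of_mem_insert [DecidableEq E] {S : Finset E} {e₀ : E} {f : E → H}
    (hf : f ∈ supportedFlows s t (insert e₀ S) H) (hf₀ : f e₀ = 0) :
    f ∈ supportedFlows s t S H := by
  rw [mem_supportedFlows] at hf ⊢
  refine ⟨hf.1, fun e he => ?_⟩
  by_cases he' : e = e₀
  · exact he' ▸ hf₀
  · exact hf.2 e (by simp [he', he])

lemma card_supportedFlows_insert [DecidableEq E] {S : Finset E} {e₀ : E} (he₀ : e₀ ∉ S)
    (hsurj : ∀ h : H, ∃ f ∈ supportedFlows s t (insert e₀ S) H, f e₀ = h) :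
    Nat.card (supportedFlows s t (insert e₀ S) H) =
      Nat.card (supportedFlows s t S H) * Nat.card H := by
  set F := supportedFlows s t (insert e₀ S) H
  let φ : F →+ H := (Pi.evalAddMonoidHom (fun _ => H) e₀).comp F.subtype
  have hφ : Function.Surjective φ := fun h => by
    obtain ⟨f, hf, rfl⟩ := hsurj h
    exact ⟨⟨f, hf⟩, rfl⟩
  have hle : supportedFlows s t S H ≤ F := supportedFlows_mono (subset_insert e₀ S)
  have hker : φ.ker = (supportedFlows s t S H).addSubgroupOf F := by
    ext ⟨f, hf⟩
    simp only [AddMonoidHom.mem_ker, AddSubgroup.mem_addSubgroupOf, φ, AddMonoidHom.comp_apply,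
      AddSubgroup.coe_subtype, Pi.evalAddMonoidHom_apply]
    exact ⟨mem_supportedFlows_of_mem_insert hf, fun h => (mem_supportedFlows.mp h).2 e₀ he₀⟩
  rw [← AddSubgroup.card_mul_index φ.ker, AddSubgroup.index_ker,
    AddMonoidHom.range_eq_top_of_surjective φ hφ, AddSubgroup.card_top, hker,
    Nat.card_congr (AddSubgroup.addSubgroupOfEquivOfLe hle).toEquiv]

lemma nzFlowCount_eq_card [Fintype V] [Fintype H] (S : Finset E) :
    nzFlowCount s t S H =
      Nat.card {f : E → H // netOutflow s t f = 0 ∧ ∀ e, f e ≠ 0 ↔ e ∈ S} := by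
  classical
  have hsupp {f : E → H} (hf : ∀ e, f e ≠ 0 ↔ e ∈ S) : ∀ e ∉ S, f e = 0 := fun e he =>
    not_not.mp (mt (hf e).mp he)
  refine Nat.card_congr
    { toFun φ := ⟨fun e => if h : e ∈ S then φ.1 ⟨e, h⟩ else 0, ?_, fun e => ?_⟩
      invFun f := ⟨fun e => f.1 e, (netOutflow_eq_zero_iff_of_support (hsupp f.2.2)).mp f.2.1,
        fun e => (f.2.2 e).mpr e.2⟩
      left_inv φ := by ext; simp
      right_inv f := by ext e; by_cases he : e ∈ S <;> simp [he, hsupp f.2.2 e] }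
  · rw [netOutflow_eq_zero_iff_of_support fun e he => dif_neg he]
    simpa using φ.2.1
  · by_cases he : e ∈ S <;> simp [he, φ.2.2]

variable [DecidableEq E] {ε : E → Sym2 V}

lemma exists_netOutflow_eq_of_walk (hst : ∀ e, ε e = s(s e, t e)) {S : Finset E} {u v : V}
    (p : (fromEdgeSet (ε '' S)).Walk u v) (h : H) :
    ∃ f : E → H, (∀ e ∉ S, f e = 0) ∧
      netOutflow s t f = Pi.single u h - Pi.single v h := by
  induction p with
  | nil => exact ⟨0, fun _ _ => rfl, by simp⟩
  | cons hadj _ ih =>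
    obtain ⟨f, hfS, hf⟩ := ih
    obtain ⟨⟨e, heS, he⟩, -⟩ := (fromEdgeSet_adj _).mp hadj
    have hsupp : ∀ e' ∉ S, (Pi.single e h : E → H) e' = 0 := fun e' he' =>
      Pi.single_eq_of_ne (ne_of_mem_of_not_mem heS he').symm _
    rw [hst, Sym2.eq_iff] at he
    rcases he with ⟨rfl, rfl⟩ | ⟨rfl, rfl⟩
    · refine ⟨f + Pi.single e h, fun e' he' => by simp [hfS e' he', hsupp e' he'], ?_⟩
      rw [map_add, hf, netOutflow_single]
      abel
    · refine ⟨f - Pi.single e h, fun e' he' => by simp [hfS e' he', hsupp e' he'], ?_⟩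
      rw [map_sub, hf, netOutflow_single]
      abel

lemma exists_mem_supportedFlows_insert_apply_eq (hst : ∀ e, ε e = s(s e, t e)) {S : Finset E}
    {e₀ : E} (he₀ : e₀ ∉ S) (hr : (fromEdgeSet (ε '' S)).Reachable (s e₀) (t e₀))
    (h : H) :
    ∃ f ∈ supportedFlows s t (insert e₀ S) H, f e₀ = h := by
  obtain ⟨p⟩ := hr.symm
  obtain ⟨f, hfS, hf⟩ := exists_netOutflow_eq_of_walk hst p h
  refine ⟨f + Pi.single e₀ h, mem_supportedFlows.mpr ⟨?_, fun e he => ?_⟩,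
    by simp [hfS e₀ he₀]⟩
  · rw [map_add, hf, netOutflow_single]
    abel
  · rw [mem_insert, not_or] at he
    simp [hfS e he.2, he.1]

lemma apply_eq_zero_of_not_reachable [Fintype V] (hst : ∀ e, ε e = s(s e, t e)) {S : Finset E}
    {e₀ : E} (hnr : ¬(fromEdgeSet (ε '' S)).Reachable (s e₀) (t e₀)) {f : E → H}
    (hf : f ∈ supportedFlows s t (insert e₀ S) H) : f e₀ = 0 := by
  classical
  rw [mem_supportedFlows] at hf
  -- Summing Kirchhoff's law over the component `C` of `s e₀`: only `e₀` crosses its boundary.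
  set C := univ.filter ((fromEdgeSet (ε '' S)).Reachable (s e₀))
  have hcross :
      ∀ e ≠ e₀, ((if s e ∈ C then f e else 0) - if t e ∈ C then f e else 0) = 0 := by
    intro e he
    by_cases heS : e ∈ S
    · have hiff : s e ∈ C ↔ t e ∈ C := by
        rcases eq_or_ne (s e) (t e) with hl | hne
        · rw [hl]
        · have hadj : (fromEdgeSet (ε '' S)).Adj (s e) (t e) :=
            (fromEdgeSet_adj _).mpr ⟨⟨e, heS, hst e⟩, hne⟩
          simp only [C, mem_filter, mem_univ, true_and]
          exact ⟨fun h' => h'.trans hadj.reachable, fun h' => h'.trans hadj.symm.reachable⟩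
      by_cases hs : s e ∈ C <;> simp [hs, hiff.mp, mt hiff.mpr]
    · simp [hf.2 e (by simp [he, heS])]
  have hs : s e₀ ∈ C := by simp [C]
  have ht : t e₀ ∉ C := by simpa [C] using hnr
  have := sum_netOutflow_apply (s := s) (t := t) C f
  rw [hf.1, Finset.sum_eq_single e₀ (fun e _ he => hcross e he) (by simp)] at this
  simpa [hs, ht] using this.symm

lemma supportedFlows_insert_of_not_reachable [Fintype V] (hst : ∀ e, ε e = s(s e, t e))
    {S : Finset E} {e₀ : E} (hnr : ¬(fromEdgeSet (ε '' S)).Reachable (s e₀) (t e₀)) :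
    supportedFlows s t (insert e₀ S) H = supportedFlows s t S H :=
  le_antisymm
    (fun _ hf => mem_supportedFlows_of_mem_insert hf (apply_eq_zero_of_not_reachable hst hnr hf))
    (supportedFlows_mono (subset_insert e₀ S))

lemma card_supportedFlows_mul_pow [Fintype V] (hst : ∀ e, ε e = s(s e, t e)) (S : Finset E) :
    Nat.card (supportedFlows s t S H) * Nat.card H ^ Fintype.card V =
      Nat.card H ^ (#S + multigraphComponents ε S) := by
  induction S using Finset.induction_on with
  | empty =>
    rw [supportedFlows_empty, AddSubgroup.card_bot, multigraphComponents, coe_empty,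
      Set.image_empty, fromEdgeSet_empty, card_connectedComponent_bot,
      Nat.card_eq_fintype_card (α := V), card_empty, zero_add, one_mul]
  | insert e₀ S he₀ ih =>
    rw [card_insert_of_notMem he₀]
    by_cases hr : (fromEdgeSet (ε '' S)).Reachable (s e₀) (t e₀)
    · have hk : multigraphComponents ε (insert e₀ S) = multigraphComponents ε S := by
        rw [multigraphComponents_insert hst]
        exact card_connectedComponent_sup_edge_of_reachable hr
      rw [card_supportedFlows_insert he₀ (exists_mem_supportedFlows_insert_apply_eq hst he₀ hr),
        hk, mul_right_comm, ih]
      ring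
    · have hk : multigraphComponents ε S = multigraphComponents ε (insert e₀ S) + 1 := by
        rw [multigraphComponents_insert hst]
        exact card_connectedComponent_eq_card_sup_edge_add_one hr
      rw [supportedFlows_insert_of_not_reachable hst hr, ih, hk]
      ring_nf

end Flows

lemma card_eq_sum_card_zero_iff {α M : Type*} [Fintype α] [DecidableEq α] [Zero M] [Finite M]
    (p : (α → M) → Prop) (A : Finset α) :
    Nat.card {f : α → M // p f ∧ ∀ a ∈ A, f a = 0} =
      ∑ B ∈ univ.powerset.filter (A ⊆ ·),
        Nat.card {f : α → M // p f ∧ ∀ a, f a = 0 ↔ a ∈ B} := by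
  classical
  have := Fintype.ofFinite M
  simp only [Nat.card_eq_fintype_card, Fintype.card_subtype]
  rw [card_eq_sum_card_fiberwise (f := fun f => univ.filter (f · = 0))
    (t := univ.powerset.filter (A ⊆ ·)) fun f hf => by
      simp only [coe_filter, mem_univ, true_and, Set.mem_ofPred_eq] at hf
      simpa [subset_iff] using hf.2]
  refine sum_congr rfl fun B hB => ?_
  rw [filter_filter]
  congr 1
  refine filter_congr fun f _ => ?_
  simp only [mem_filter, mem_powerset, subset_univ, true_and] at hB
  constructor
  · rintro ⟨⟨hp, -⟩, rfl⟩
    exact ⟨hp, by simp⟩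
  · rintro ⟨hp, hB'⟩
    exact ⟨⟨hp, fun a ha => (hB' a).mpr (hB ha)⟩, by ext; simp [hB']⟩

theorem flows_by_zero_sets_general {V E : Type*} [Fintype V] [Fintype E]
    [DecidableEq V] [DecidableEq E]
    (ε : E → Sym2 V) (s t : E → V) (hst : ∀ e, ε e = s(s e, t e))
    (q : ℕ) (H : Type*) [AddCommGroup H] [Fintype H]
    (hH : Fintype.card H = q) (A : Finset E) :
    (q : ℚ) ^ (((Finset.univ \ A).card : ℤ) -
        ((Fintype.card V : ℤ) - (multigraphComponents ε (Finset.univ \ A) : ℤ))) =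
      ∑ B ∈ Finset.univ.powerset.filter (fun B => A ⊆ B),
        (nzFlowCount s t (Finset.univ \ B) H : ℚ) := by
  have hq : (q : ℚ) ≠ 0 := by rw [← hH]; exact_mod_cast Fintype.card_ne_zero
  have hcount := card_supportedFlows_mul_pow (H := H) hst (univ \ A)
  rw [Nat.card_eq_fintype_card (α := H), hH] at hcount
  have hflows : Nat.card (supportedFlows s t (univ \ A) H) =
      ∑ B ∈ univ.powerset.filter (fun B => A ⊆ B), nzFlowCount s t (univ \ B) H := by
    simp only [nzFlowCount_eq_card, mem_sdiff, mem_univ, true_and, ne_eq, not_iff_not]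
    rw [← card_eq_sum_card_zero_iff]
    exact Nat.card_congr (Equiv.subtypeEquivRight fun f => by simp [mem_supportedFlows])
  rw [← Nat.cast_sum, ← hflows, sub_sub_eq_add_sub, zpow_sub₀ hq,
    div_eq_iff (zpow_ne_zero _ hq)]
  exact_mod_cast hcount.symm

/-- Counting flows by their zero sets:
`q^{|E∖A| - r_G(E∖A)} = ∑_{A ⊆ B ⊆ E} χ*(G-B;q)`, where `r_G(S) = |V| - k_G(S)` and
`|H| = q`. -/
theorem flows_by_zero_sets {V E : Type*} [Fintype V] [Fintype E]
    [DecidableEq V] [DecidableEq E]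
    (ε : E → Sym2 V) (s t : E → V) (hst : ∀ e, ε e = s(s e, t e))
    (q : ℕ) (hq : 0 < q) (H : Type*) [AddCommGroup H] [Fintype H]
    (hH : Fintype.card H = q) (A : Finset E) :
    (q : ℚ) ^ (((Finset.univ \ A).card : ℤ) -
        ((Fintype.card V : ℤ) - (multigraphComponents ε (Finset.univ \ A) : ℤ))) =
      ∑ B ∈ Finset.univ.powerset.filter (fun B => A ⊆ B),
        (nzFlowCount s t (Finset.univ \ B) H : ℚ) :=
  flows_by_zero_sets_general ε s t hst q H hH A
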